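/- Conjecture: for every norm ‖·‖ on ℝ^m there exists a constant C₂ > 0 depending only on the norm such that whenever Q ∈ ℝ^{m×m} is produced by the arbitrary-norm QR algorithm (columns are unit-norm normalized residuals of best approximations, each at distance 1 from the span of the previous columns), then min_{‖x‖=1} ‖Qx‖ ≥ C₂. -/

import Mathlib

/-!
Write `Q x = ∑ j, x j • q j` for the columns `q j` and let `P k = ∑_{i<k} x i • q i`. Since
`P j ∈ span (q i, i < j)` and `q j` is at distance `1` from that span, `|x j| ≤ ν (P (j+1))`;
and `P j = P (j+1) - x j • q j` gives `ν (P j) ≤ ν (P (j+1)) + |x j| ≤ 2 ν (P (j+1))`.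
Hence `|x j| ≤ 2 ^ m ν (Q x)` for all `j`, and comparing `ν` with the sup norm,
`ν x ≤ K ‖x‖ ≤ K 2 ^ m ν (Q x)` with `K = ∑ i, ν (eᵢ) + 1`.
-/

def IsNorm {m : ℕ} (ν : (Fin m → ℝ) → ℝ) : Prop :=
  (∀ x, 0 ≤ ν x) ∧ (∀ x, ν x = 0 → x = 0) ∧
  (∀ (a : ℝ) (x : Fin m → ℝ), ν (a • x) = |a| * ν x) ∧
  (∀ x y : Fin m → ℝ, ν (x + y) ≤ ν x + ν y)

open Finset

def IsNorm.toSeminorm {m : ℕ} {ν : (Fin m → ℝ) → ℝ} (hν : IsNorm ν) :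
    Seminorm ℝ (Fin m → ℝ) :=
  Seminorm.of ν hν.2.2.2 fun a x => by rw [hν.2.2.1, Real.norm_eq_abs]

namespace Seminorm

theorem apply_le_mul_norm_pi {ι : Type*} [Fintype ι] [DecidableEq ι] (p : Seminorm ℝ (ι → ℝ))
    (x : ι → ℝ) :
    p x ≤ (∑ i, p (Pi.single i 1)) * ‖x‖ := by
  calc p x = p (∑ i, x i • Pi.single i 1) := by rw [← pi_eq_sum_univ' x]
    _ ≤ ∑ i, p (x i • Pi.single i 1) :=
        le_sum_of_subadditive p (map_zero p).le (map_add_le_add p) _ _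
    _ = ∑ i, |x i| * p (Pi.single i 1) := by simp only [map_smul_eq_mul, Real.norm_eq_abs]
    _ ≤ ∑ i, ‖x‖ * p (Pi.single i 1) := by
        gcongr with i
        exact norm_le_pi_norm x i
    _ = _ := by rw [← mul_sum, mul_comm]

variable {E : Type*} [AddCommGroup E] [Module ℝ E] (p : Seminorm ℝ E)

theorem abs_le_apply_smul_add {V : Submodule ℝ E} {u v : E} (hu : ∀ w ∈ V, 1 ≤ p (u - w))
    (hv : v ∈ V) (a : ℝ) : |a| ≤ p (a • u + v) := by
  rcases eq_or_ne a 0 with rfl | ha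
  · simp
  calc |a| = |a| * 1 := (mul_one _).symm
    _ ≤ |a| * p (u - -a⁻¹ • v) := by gcongr; exact hu _ (V.smul_mem _ hv)
    _ = p (a • u + v) := by
        rw [← Real.norm_eq_abs, ← map_smul_eq_mul]
        congr 1
        match_scalars <;> field_simp

theorem sInf_le_apply_sub {V : Set E} {u w : E} (hw : w ∈ V) :
    sInf {r : ℝ | ∃ w ∈ V, r = p (u - w)} ≤ p (u - w) :=
  csInf_le ⟨0, by rintro _ ⟨w, -, rfl⟩; exact apply_nonneg _ _⟩ ⟨w, hw, rfl⟩

end Seminorm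

section PartialSums

variable {E : Type*} [AddCommGroup E] [Module ℝ E] {m : ℕ}

def partialLinComb (x : Fin m → ℝ) (q : Fin m → E) (k : ℕ) : E :=
  ∑ i : Fin m with i.val < k, x i • q i

variable (x : Fin m → ℝ) (q : Fin m → E)

theorem partialLinComb_succ (j : Fin m) :
    partialLinComb x q (j + 1) = x j • q j + partialLinComb x q j := by
  classical
  have : univ.filter (fun i : Fin m => i.val < j + 1) =
      insert j (univ.filter fun i : Fin m => i.val < j) := by
    ext i; simp [le_iff_eq_or_lt, Fin.val_inj]
  rw [partialLinComb, this, sum_insert (by simp), partialLinComb]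

theorem partialLinComb_mem_span (j : Fin m) :
    partialLinComb x q j ∈ Submodule.span ℝ (q '' Set.Iio j) :=
  Submodule.sum_mem _ fun i hi => Submodule.smul_mem _ _ <|
    Submodule.subset_span ⟨i, by simpa using hi, rfl⟩

theorem partialLinComb_self : partialLinComb x q m = ∑ i, x i • q i := by
  simp [partialLinComb]

end PartialSums

namespace Seminorm

variable {E : Type*} [AddCommGroup E] [Module ℝ E] {p : Seminorm ℝ E} {m : ℕ} {q : Fin m → E}
  (x : Fin m → ℝ) (hsep : ∀ j, ∀ w ∈ Submodule.span ℝ (q '' Set.Iio j), 1 ≤ p (q j - w))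
include hsep

theorem abs_le_apply_partialLinComb_succ (j : Fin m) :
    |x j| ≤ p (partialLinComb x q (j + 1)) := by
  rw [partialLinComb_succ]
  exact p.abs_le_apply_smul_add (hsep j) (partialLinComb_mem_span x q j) _

variable (hq : ∀ j, p (q j) ≤ 1)
include hq

theorem apply_partialLinComb_le_two_mul (j : Fin m) :
    p (partialLinComb x q j) ≤ 2 * p (partialLinComb x q (j + 1)) := by
  have hj := abs_le_apply_partialLinComb_succ x hsep j
  calc p (partialLinComb x q j) = p (partialLinComb x q (j + 1) - x j • q j) := by
        rw [partialLinComb_succ, add_sub_cancel_left]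
    _ ≤ p (partialLinComb x q (j + 1)) + |x j| * p (q j) := by
        rw [← Real.norm_eq_abs, ← map_smul_eq_mul]; exact map_sub_le_add p _ _
    _ ≤ p (partialLinComb x q (j + 1)) + |x j| := by
        gcongr; exact mul_le_of_le_one_right (abs_nonneg _) (hq j)
    _ ≤ 2 * p (partialLinComb x q (j + 1)) := by linarith

theorem apply_partialLinComb_le_two_pow_mul {k : ℕ} (hk : k ≤ m) :
    p (partialLinComb x q k) ≤ 2 ^ (m - k) * p (partialLinComb x q m) := by
  induction hk using Nat.decreasingInduction with
  | self => simp
  | of_succ k hk ih =>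
    calc p (partialLinComb x q k) ≤ 2 * p (partialLinComb x q (k + 1)) :=
          apply_partialLinComb_le_two_mul x hsep hq ⟨k, hk⟩
      _ ≤ 2 * (2 ^ (m - (k + 1)) * p (partialLinComb x q m)) := by gcongr
      _ = 2 ^ (m - k) * p (partialLinComb x q m) := by
          rw [← mul_assoc, ← pow_succ', show m - (k + 1) + 1 = m - k by omega]

theorem norm_le_two_pow_mul_apply_sum_smul : ‖x‖ ≤ 2 ^ m * p (∑ i, x i • q i) := by
  refine (pi_norm_le_iff_of_nonneg (by positivity)).2 fun j => ?_
  rw [← partialLinComb_self]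
  calc ‖x j‖ ≤ p (partialLinComb x q (j + 1)) := abs_le_apply_partialLinComb_succ x hsep j
    _ ≤ 2 ^ (m - (j + 1)) * p (partialLinComb x q m) :=
        apply_partialLinComb_le_two_pow_mul x hsep hq j.isLt
    _ ≤ 2 ^ m * p (partialLinComb x q m) := by
        gcongr
        · exact one_le_two
        · omega

end Seminorm

theorem stmt15 {m : ℕ} (ν : (Fin m → ℝ) → ℝ) (hν : IsNorm ν) :
    ∃ C₂ : ℝ, 0 < C₂ ∧
      ∀ Q : Matrix (Fin m) (Fin m) ℝ,
        (∀ j : Fin m, ν (fun i => Q i j) = 1) →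
        (∀ j : Fin m,
          sInf {r : ℝ | ∃ w ∈ Submodule.span ℝ {v : Fin m → ℝ | ∃ i, i < j ∧ v = fun r' => Q r' i},
            r = ν ((fun i => Q i j) - w)} = 1) →
        ∀ x : Fin m → ℝ, ν x = 1 → C₂ ≤ ν (Q.mulVec x) := by
  set p := hν.toSeminorm
  set K := ∑ i, p (Pi.single i 1) + 1
  have hK : 0 < K := by positivity
  refine ⟨1 / (2 ^ m * K), by positivity, fun Q hcol hdist x hx => ?_⟩
  set q : Fin m → Fin m → ℝ := fun j i => Q i j
  have hspan (j : Fin m) : {v | ∃ i, i < j ∧ v = q i} = q '' Set.Iio j := by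
    ext v; simp [eq_comm]
  have hsep (j : Fin m) (w) (hw : w ∈ Submodule.span ℝ (q '' Set.Iio j)) : 1 ≤ p (q j - w) :=
    hdist j ▸ p.sInf_le_apply_sub (hspan j ▸ hw)
  have hQx : Q.mulVec x = ∑ j, x j • q j := by
    ext i; simp [Matrix.mulVec, dotProduct, q, mul_comm]
  have hx_le := p.norm_le_two_pow_mul_apply_sum_smul x hsep fun j => (hcol j).le
  rw [div_le_iff₀ (by positivity)]
  calc 1 = p x := hx.symm
    _ ≤ K * ‖x‖ := (p.apply_le_mul_norm_pi x).trans (by gcongr; linarith)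
    _ ≤ K * (2 ^ m * ν (Q.mulVec x)) := by rw [hQx]; gcongr; exact hx_le
    _ = ν (Q.mulVec x) * (2 ^ m * K) := by ring
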